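/- Let M₀ be a non-negative integer square matrix in PB-Frobenius form which is expanding, and let M₁ = M₀^k be a positive power of M₀ that is in primitive Frobenius form. Then every non-negative eigenvector of M₁ is also an eigenvector of M₀. -/

import Mathlib

open Filter Matrix

noncomputable section

def l1 {ι : Type*} [Fintype ι] (v : ι → ℝ) : ℝ := ∑ i, |v i|

def IsPrimitive {ι : Type*} [Fintype ι] [DecidableEq ι] (M : Matrix ι ι ℝ) : Prop :=
  ∃ k : ℕ, 0 < k ∧ ∀ i j, 0 < (M ^ k) i j

def IsPowerBounded {ι : Type*} [Fintype ι] [DecidableEq ι] (M : Matrix ι ι ℝ) : Prop :=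
  ∃ C : ℝ, ∀ t : ℕ, 1 ≤ t → ∀ i j, (M ^ t) i j ≤ C

def diagBlock {ι : Type*} {m : ℕ} (M : Matrix ι ι ℝ) (b : ι → Fin m) (p : Fin m) :
    Matrix {i // b i = p} {i // b i = p} ℝ :=
  Matrix.of fun i j => M i.1 j.1

/-- `M` is a lower triangular block matrix (for the block structure given by `b`, where
blocks are ordered by the order of `Fin m`; an arbitrary function `b` accounts for
conjugation by a permutation) in which every diagonal block is primitive or power bounded. -/
def IsPBFrobenius {ι : Type*} [Fintype ι] [DecidableEq ι] (M : Matrix ι ι ℝ) : Prop :=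
  ∃ (m : ℕ) (b : ι → Fin m),
    (∀ i j, b i < b j → M i j = 0) ∧
    ∀ p : Fin m, _root_.IsPrimitive (diagBlock M b p) ∨ IsPowerBounded (diagBlock M b p)

/-- Primitive Frobenius form: lower triangular block matrix, every diagonal block
primitive (1×1 blocks with entry 1 are primitive; 1×1 blocks with entry 0 are covered
by the second disjunct). -/
def IsPrimFrobenius {ι : Type*} [Fintype ι] [DecidableEq ι] (M : Matrix ι ι ℝ) : Prop :=
  ∃ (m : ℕ) (b : ι → Fin m),
    (∀ i j, b i < b j → M i j = 0) ∧
    ∀ p : Fin m, _root_.IsPrimitive (diagBlock M b p) ∨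
      (∀ i j, b i = p → b j = p → i = j ∧ M i j = 0)

/-- No coordinate vector is mapped by a positive power of `M` to itself or to `0`. -/
def MatExpanding {ι : Type*} [Fintype ι] [DecidableEq ι] (M : Matrix ι ι ℝ) : Prop :=
  ¬ ∃ (i : ι) (k : ℕ), 0 < k ∧
      ((M ^ k).mulVec (Pi.single i 1) = Pi.single i 1 ∨ (M ^ k).mulVec (Pi.single i 1) = 0)

/-
The eigenvalue `μ` of `M₀ ^ k` is `> 1`. Otherwise, since expansion leaves no zero column in
any power, the integer columns of the powers `M₀ ^ (k q)` at a coordinate in the support of `v`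
have sum exactly `1`, i.e. are unit vectors, and by pigeonhole some unit vector is fixed by a
positive power of `M₀`, contradicting expansion.

With `c = μ ^ (1/k) > 1` and `A = c⁻¹ • M₀`, the orbit `A ^ t v` has period `k` and
`u = ∑_{t<k} A ^ t v` is a fixed point of `A`. The difference `w = A v - v` also has a
`k`-periodic orbit, now with zero sum over a period, and it is shown to vanish block by block,
going down the block triangular structure. On a power-bounded block the factor `c⁻¹` makes the
orbit decay, so being periodic it is zero. On a primitive block the ratio `(A ^ t w)_i / u_i`
attains its maximum `D` along the orbit; primitivity forces `A ^ t w = D • u` at some time, so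
the orbit is nonnegative from then on, and the zero sum kills it.
-/

open Finset

namespace Matrix

variable {ι : Type*} [Fintype ι]

section CommSemiring

variable {R : Type*} [CommSemiring R] [DecidableEq ι]

theorem pow_mulVec_eq_pow_smul {A : Matrix ι ι R} {x : ι → R} {c : R} (h : A *ᵥ x = c • x)
    (q : ℕ) : A ^ q *ᵥ x = c ^ q • x := by
  induction q with
  | zero => simp
  | succ q ih => rw [pow_succ', ← mulVec_mulVec, ih, mulVec_smul, h, smul_smul, pow_succ]

theorem pow_mul_mulVec_eq_self {A : Matrix ι ι R} {x : ι → R} {k : ℕ} (h : A ^ k *ᵥ x = x)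
    (q : ℕ) : A ^ (k * q) *ᵥ x = x := by
  simpa [pow_mul] using pow_mulVec_eq_pow_smul (c := (1 : R)) (by simpa using h) q

theorem pow_mulVec_mod {A : Matrix ι ι R} {x : ι → R} {k : ℕ} (h : A ^ k *ᵥ x = x) (t : ℕ) :
    A ^ t *ᵥ x = A ^ (t % k) *ᵥ x := by
  conv_lhs => rw [← Nat.mod_add_div t k, pow_add, ← mulVec_mulVec, pow_mul_mulVec_eq_self h]

theorem map_natCast_pow_apply (N : Matrix ι ι ℕ) (t : ℕ) (i j : ι) :
    (N.map ((↑) : ℕ → R) ^ t) i j = ((N ^ t) i j : R) := by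
  rw [← Nat.coe_castRingHom, ← Matrix.map_pow]
  rfl

end CommSemiring

section CommRing

variable {R : Type*} [CommRing R] [DecidableEq ι]

theorem sum_range_pow_mulVec_sub (A : Matrix ι ι R) (v : ι → R) (k : ℕ) :
    ∑ t ∈ range k, A ^ t *ᵥ (A *ᵥ v - v) = A ^ k *ᵥ v - v := by
  simp_rw [mulVec_sub, mulVec_mulVec, ← pow_succ]
  rw [sum_range_sub (fun t => A ^ t *ᵥ v), pow_zero, one_mulVec]

theorem mulVec_sum_range_pow_mulVec_sub (A : Matrix ι ι R) (v : ι → R) (k : ℕ) :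
    A *ᵥ ∑ t ∈ range k, A ^ t *ᵥ v - ∑ t ∈ range k, A ^ t *ᵥ v = A ^ k *ᵥ v - v := by
  rw [← sum_range_pow_mulVec_sub, mulVec_sum, ← sum_sub_distrib]
  refine sum_congr rfl fun t _ => ?_
  rw [mulVec_sub, mulVec_mulVec, mulVec_mulVec, ← pow_succ, ← pow_succ']

end CommRing

variable {A : Matrix ι ι ℝ}

theorem mulVec_nonneg (hA : ∀ i j, 0 ≤ A i j) {x : ι → ℝ} (hx : 0 ≤ x) : 0 ≤ A *ᵥ x :=
  fun i => sum_nonneg fun j _ => mul_nonneg (hA i j) (hx j)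

theorem mulVec_mono_of_nonneg (hA : ∀ i j, 0 ≤ A i j) {x y : ι → ℝ} (h : x ≤ y) :
    A *ᵥ x ≤ A *ᵥ y :=
  fun i => sum_le_sum fun j _ => mul_le_mul_of_nonneg_left (h j) (hA i j)

theorem pow_mulVec_le_of_mulVec_le [DecidableEq ι] (hA : ∀ i j, 0 ≤ A i j) {r : ι → ℝ}
    (hAr : A *ᵥ r ≤ r) (t : ℕ) : A ^ t *ᵥ r ≤ r := by
  induction t with
  | zero => simp
  | succ t ih => rw [pow_succ', ← mulVec_mulVec]; exact (mulVec_mono_of_nonneg hA ih).trans hAr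

theorem pow_mulVec_apply_eq_zero_of_sum_apply_eq_zero [DecidableEq ι] (hA : ∀ i j, 0 ≤ A i j)
    {v : ι → ℝ} (hv : 0 ≤ v) {k : ℕ} (hk : 0 < k) (hper : A ^ k *ᵥ v = v) {i : ι}
    (hi : (∑ t ∈ range k, A ^ t *ᵥ v) i = 0) (t : ℕ) : (A ^ t *ᵥ v) i = 0 := by
  rw [Finset.sum_apply] at hi
  rw [pow_mulVec_mod hper t]
  exact (sum_eq_zero_iff_of_nonneg fun s _ => mulVec_nonneg (pow_apply_nonneg hA s) hv i).mp hi _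
    (mem_range.mpr (Nat.mod_lt t hk))

theorem abs_mulVec_apply_le {i : ι} (hA : ∀ j, 0 ≤ A i j) {C : ℝ} (hC : ∀ j, A i j ≤ C)
    (x : ι → ℝ) : |(A *ᵥ x) i| ≤ C * l1 x :=
  calc |∑ j, A i j * x j| ≤ ∑ j, |A i j * x j| := abs_sum_le_sum_abs _ _
    _ ≤ ∑ j, C * |x j| := sum_le_sum fun j _ => by
        rw [abs_mul, abs_of_nonneg (hA j)]
        exact mul_le_mul_of_nonneg_right (hC j) (abs_nonneg _)
    _ = C * l1 x := (mul_sum _ _ _).symm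

theorem eq_of_mulVec_apply_eq_of_le {P : Matrix ι ι ℝ} (hP : ∀ i j, 0 < P i j) {x y : ι → ℝ}
    (hxy : x ≤ y) {i : ι} (h : (P *ᵥ x) i = (P *ᵥ y) i) : x = y := by
  by_contra hne
  obtain ⟨j, hj⟩ := Function.ne_iff.mp hne
  refine h.not_lt (sum_lt_sum (fun l _ => mul_le_mul_of_nonneg_left (hxy l) (hP i l).le) ?_)
  exact ⟨j, mem_univ j, mul_lt_mul_of_pos_left ((hxy j).lt_of_ne hj) (hP i j)⟩

theorem sum_apply_eq_one_of_sum_mulVec_le (hA : ∀ j, 1 ≤ ∑ i, A i j) {v : ι → ℝ} (hv : 0 ≤ v)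
    (h : ∑ i, (A *ᵥ v) i ≤ ∑ i, v i) {j : ι} (hj : 0 < v j) : ∑ i, A i j = 1 := by
  have hcols : ∑ i, (A *ᵥ v) i = ∑ l, (∑ i, A i l) * v l := by
    simp only [mulVec, dotProduct, sum_mul]
    exact sum_comm
  have hterm : ∀ l ∈ univ, 0 ≤ (∑ i, A i l - 1) * v l :=
    fun l _ => mul_nonneg (sub_nonneg.mpr (hA l)) (hv l)
  have hzero : ∑ l, (∑ i, A i l - 1) * v l = 0 := by
    refine le_antisymm ?_ (sum_nonneg hterm)
    simpa [sub_mul, sum_sub_distrib, ← hcols] using h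
  have hj0 := (sum_eq_zero_iff_of_nonneg hterm).mp hzero j (mem_univ j)
  linarith [(mul_eq_zero.mp hj0).resolve_right hj.ne']

end Matrix

open Matrix

theorem exists_eq_single_of_sum_eq_one {ι : Type*} [Fintype ι] [DecidableEq ι] {c : ι → ℕ}
    (h : ∑ i, c i = 1) : ∃ i, c = Pi.single i 1 := by
  obtain ⟨a, ha⟩ := (Finsupp.sum_eq_one_iff (Finsupp.equivFunOnFinite.symm c)).mp
    (by rwa [Finsupp.sum_fintype _ _ fun _ => rfl])
  exact ⟨a, by simpa [← Finsupp.single_eq_pi_single] using congrArg Finsupp.equivFunOnFinite ha⟩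

section Expanding

variable {ι : Type*} [Fintype ι] [DecidableEq ι]

theorem MatExpanding.sum_pow_apply_ne_zero {N : Matrix ι ι ℕ}
    (hexp : MatExpanding (N.map ((↑) : ℕ → ℝ))) (t : ℕ) (j : ι) : ∑ i, (N ^ t) i j ≠ 0 := by
  rcases t.eq_zero_or_pos with rfl | ht
  · simp [one_apply]
  · intro h0
    refine hexp ⟨j, t, ht, Or.inr (funext fun i => ?_)⟩
    rw [mulVec_single_one, col_apply, map_natCast_pow_apply, sum_eq_zero_iff.mp h0 i (mem_univ i)]
    simp

theorem MatExpanding.one_lt_of_pow_mulVec_eq_smul {N : Matrix ι ι ℕ}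
    (hexp : MatExpanding (N.map ((↑) : ℕ → ℝ))) {k : ℕ} (hk : 0 < k) {v : ι → ℝ} (hv : 0 ≤ v)
    (hv0 : v ≠ 0) {μ : ℝ} (h : N.map (↑) ^ k *ᵥ v = μ • v) : 1 < μ := by
  set M := N.map ((↑) : ℕ → ℝ)
  by_contra! hμ
  obtain ⟨j, hj⟩ : ∃ j, 0 < v j := by
    obtain ⟨j, hj⟩ := Function.ne_iff.mp hv0
    exact ⟨j, (hv j).lt_of_ne' hj⟩
  have hμ0 : 0 ≤ μ := by
    have : 0 ≤ (M ^ k *ᵥ v) j :=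
      mulVec_nonneg (pow_apply_nonneg (fun i j => Nat.cast_nonneg (N i j)) k) hv j
    rw [h, Pi.smul_apply, smul_eq_mul] at this
    exact nonneg_of_mul_nonneg_left this hj
  -- column sums are `≥ 1` by expansion, and their average against `v` is `μ ^ q ≤ 1`
  have hunit : ∀ q, ∃ i, M ^ (k * q) *ᵥ Pi.single j 1 = Pi.single i 1 := by
    intro q
    have hcol : ∀ l, 1 ≤ ∑ i, (M ^ (k * q)) i l := fun l => by
      simp only [M, map_natCast_pow_apply]
      exact_mod_cast Nat.one_le_iff_ne_zero.mpr (hexp.sum_pow_apply_ne_zero _ l)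
    have hle : ∑ i, (M ^ (k * q) *ᵥ v) i ≤ ∑ i, v i := by
      simp only [pow_mul, pow_mulVec_eq_pow_smul h, Pi.smul_apply, smul_eq_mul, ← mul_sum]
      exact mul_le_of_le_one_left (sum_nonneg fun i _ => hv i) (pow_le_one₀ hμ0 hμ)
    have hsum := sum_apply_eq_one_of_sum_mulVec_le hcol hv hle hj
    simp only [M, map_natCast_pow_apply] at hsum
    obtain ⟨i, hi⟩ := exists_eq_single_of_sum_eq_one (c := fun i => (N ^ (k * q)) i j)
      (by exact_mod_cast hsum)
    refine ⟨i, funext fun i' => ?_⟩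
    rw [mulVec_single_one, col_apply, map_natCast_pow_apply, congrFun hi i']
    by_cases hi' : i' = i <;> simp [hi']
  choose g hg using hunit
  obtain ⟨a, b, hab, hgab⟩ := Finite.exists_ne_map_eq_of_infinite g
  wlog hlt : a < b generalizing a b
  · exact this b a hab.symm hgab.symm (by omega)
  refine hexp ⟨g a, k * (b - a), Nat.mul_pos hk (by omega), Or.inl ?_⟩
  calc M ^ (k * (b - a)) *ᵥ Pi.single (g a) 1
      = M ^ (k * (b - a)) *ᵥ (M ^ (k * a) *ᵥ Pi.single j 1) := by rw [hg]
    _ = M ^ (k * b) *ᵥ Pi.single j 1 := by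
        rw [mulVec_mulVec, ← pow_add, ← mul_add, Nat.sub_add_cancel hlt.le]
    _ = Pi.single (g a) 1 := by rw [hg, hgab]

end Expanding

section Blocks

variable {ι : Type*} [Fintype ι]

theorem diagBlock_mulVec_apply {m : ℕ} {A : Matrix ι ι ℝ} {b : ι → Fin m}
    (htri : ∀ i j, b i < b j → A i j = 0) {p : Fin m} {y : ι → ℝ} (hy : ∀ j, b j < p → y j = 0)
    (i : {i // b i = p}) : (diagBlock A b p *ᵥ fun j => y j) i = (A *ᵥ y) i := by
  change ∑ j : {j // b j = p}, A i j * y j = ∑ j, A i j * y j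
  rw [← Fintype.sum_subtype_add_sum_subtype (fun j => b j = p) fun j => A i j * y j,
    left_eq_add]
  refine sum_eq_zero fun j _ => ?_
  rcases lt_or_gt_of_ne j.2 with h | h
  · rw [hy j h, mul_zero]
  · rw [htri i j (i.2.trans_lt h), zero_mul]

theorem diagBlock_mulVec_apply_le {m : ℕ} {A : Matrix ι ι ℝ} (hA : ∀ i j, 0 ≤ A i j)
    (b : ι → Fin m) (p : Fin m) {y : ι → ℝ} (hy : 0 ≤ y) (i : {i // b i = p}) :
    (diagBlock A b p *ᵥ fun j => y j) i ≤ (A *ᵥ y) i := by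
  change ∑ j : {j // b j = p}, A i j * y j ≤ ∑ j, A i j * y j
  rw [← Fintype.sum_subtype_add_sum_subtype (fun j => b j = p) fun j => A i j * y j]
  exact le_add_of_nonneg_right (sum_nonneg fun j _ => mul_nonneg (hA i j) (hy j))

variable [DecidableEq ι]

theorem IsPowerBounded.eq_zero_of_pow_mulVec_eq_self {B : Matrix ι ι ℝ} (hB : ∀ i j, 0 ≤ B i j)
    (hPB : IsPowerBounded B) {c : ℝ} (hc : 1 < c) {k : ℕ} (hk : 0 < k) {x : ι → ℝ}
    (hx : (c⁻¹ • B) ^ k *ᵥ x = x) : x = 0 := by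
  obtain ⟨C, hC⟩ := hPB
  set q := c⁻¹ ^ k
  have hq0 : 0 ≤ q := by positivity
  have hq1 : q < 1 := pow_lt_one₀ (by positivity) (inv_lt_one_of_one_lt₀ hc) hk.ne'
  funext i
  have hbound : ∀ m, 1 ≤ m → |x i| ≤ q ^ m * (C * l1 x) := by
    intro m hm
    have hxm : x = q ^ m • (B ^ (k * m) *ᵥ x) := by
      conv_lhs => rw [← pow_mul_mulVec_eq_self hx m]
      rw [smul_pow, smul_mulVec, pow_mul]
    conv_lhs => rw [hxm, Pi.smul_apply, smul_eq_mul, abs_mul, abs_of_nonneg (pow_nonneg hq0 m)]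
    exact mul_le_mul_of_nonneg_left (abs_mulVec_apply_le (pow_apply_nonneg hB _ i)
      (hC _ (Nat.one_le_iff_ne_zero.mpr (by positivity)) i) x) (pow_nonneg hq0 m)
  have hlim := (tendsto_pow_atTop_nhds_zero_of_lt_one hq0 hq1).mul_const (C * l1 x)
  rw [zero_mul] at hlim
  exact abs_nonpos_iff.mp (ge_of_tendsto hlim (eventually_atTop.mpr ⟨1, hbound⟩))

theorem IsPrimitive.smul {B : Matrix ι ι ℝ} (hB : _root_.IsPrimitive B) {c : ℝ} (hc : 0 < c) :
    _root_.IsPrimitive (c • B) := by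
  obtain ⟨t, ht, hpos⟩ := hB
  refine ⟨t, ht, fun i j => ?_⟩
  rw [smul_pow, Matrix.smul_apply, smul_eq_mul]
  exact mul_pos (pow_pos hc t) (hpos i j)

theorem IsPrimitive.pos_of_mulVec_le {A : Matrix ι ι ℝ} (hA : ∀ i j, 0 ≤ A i j)
    (hprim : _root_.IsPrimitive A) {r : ι → ℝ} (hr : 0 ≤ r) (hr0 : r ≠ 0) (hAr : A *ᵥ r ≤ r)
    (i : ι) : 0 < r i := by
  obtain ⟨t, -, hpos⟩ := hprim
  obtain ⟨j, hj⟩ := Function.ne_iff.mp hr0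
  calc 0 < (A ^ t) i j * r j := mul_pos (hpos i j) ((hr j).lt_of_ne' hj)
    _ ≤ (A ^ t *ᵥ r) i := single_le_sum (f := fun l => (A ^ t) i l * r l)
        (fun l _ => mul_nonneg (hpos i l).le (hr l)) (mem_univ j)
    _ ≤ r i := pow_mulVec_le_of_mulVec_le hA hAr t i

theorem exists_le_smul_of_pow_mulVec_eq_self [Nonempty ι] {A : Matrix ι ι ℝ} {k : ℕ} (hk : 0 < k)
    {x : ι → ℝ} (hper : A ^ k *ᵥ x = x) {r : ι → ℝ} (hr : ∀ i, 0 < r i) :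
    ∃ (D : ℝ) (t : ℕ) (i : ι), (∀ s, A ^ s *ᵥ x ≤ D • r) ∧ (A ^ t *ᵥ x) i = D * r i := by
  have : NeZero k := ⟨hk.ne'⟩
  obtain ⟨⟨t, i⟩, hmax⟩ :=
    Finite.exists_max fun p : Fin k × ι => (A ^ (p.1 : ℕ) *ᵥ x) p.2 / r p.2
  refine ⟨(A ^ (t : ℕ) *ᵥ x) i / r i, t, i, fun s l => ?_, (div_mul_cancel₀ _ (hr i).ne').symm⟩
  have hl := hmax (⟨s % k, Nat.mod_lt s hk⟩, l)
  rw [pow_mulVec_mod hper s, Pi.smul_apply, smul_eq_mul]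
  exact (div_le_iff₀ (hr l)).mp hl

theorem IsPrimitive.eq_zero_of_pow_mulVec_eq_self {A : Matrix ι ι ℝ} (hA : ∀ i j, 0 ≤ A i j)
    (hprim : _root_.IsPrimitive A) {r : ι → ℝ} (hr : 0 ≤ r) (hr0 : r ≠ 0) (hAr : A *ᵥ r ≤ r)
    {k : ℕ} (hk : 0 < k) {x : ι → ℝ} (hper : A ^ k *ᵥ x = x)
    (hsum : ∑ t ∈ range k, A ^ t *ᵥ x = 0) : x = 0 := by
  have hr_pos := hprim.pos_of_mulVec_le hA hr hr0 hAr
  obtain ⟨t₀, -, hpos⟩ := hprim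
  cases isEmpty_or_nonempty ι
  · exact Subsingleton.elim _ _
  obtain ⟨D, ts, is, hle, hmax⟩ := exists_le_smul_of_pow_mulVec_eq_self hk hper hr_pos
  have hD : 0 ≤ D := by
    by_contra! hD
    have hneg : ∑ t ∈ range k, (A ^ t *ᵥ x) is < 0 :=
      sum_neg (fun t _ => (hle t is).trans_lt (mul_neg_of_neg_of_pos hD (hr_pos is)))
        ⟨0, mem_range.mpr hk⟩
    rw [← Finset.sum_apply, hsum] at hneg
    exact hneg.false
  have hshift : ∀ t s, A ^ (t + s) *ᵥ x = A ^ s *ᵥ (A ^ t *ᵥ x) := fun t s => by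
    rw [mulVec_mulVec, ← pow_add, add_comm]
  -- the maximal ratio `D` is attained at `ts` by the whole vector `A ^ t' *ᵥ x`
  set t' := ts + k * t₀ - t₀
  have hE' : A ^ t' *ᵥ x = D • r := by
    refine eq_of_mulVec_apply_eq_of_le hpos (hle t') (i := is) (le_antisymm
      (mulVec_mono_of_nonneg (fun i j => (hpos i j).le) (hle t') is) ?_)
    have ht' : t' + t₀ = ts + k * t₀ := Nat.sub_add_cancel (by nlinarith)
    calc (A ^ t₀ *ᵥ D • r) is = D * (A ^ t₀ *ᵥ r) is := by
          rw [mulVec_smul, Pi.smul_apply, smul_eq_mul]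
      _ ≤ D * r is := mul_le_mul_of_nonneg_left (pow_mulVec_le_of_mulVec_le hA hAr t₀ is) hD
      _ = (A ^ ts *ᵥ x) is := hmax.symm
      _ = (A ^ t₀ *ᵥ (A ^ t' *ᵥ x)) is := by
          rw [← hshift, ht', pow_add, ← mulVec_mulVec, pow_mul_mulVec_eq_self hper]
  have hnonneg : ∀ s, 0 ≤ A ^ s *ᵥ (A ^ t' *ᵥ x) := fun s => by
    rw [hE']
    exact mulVec_nonneg (pow_apply_nonneg hA s) (smul_nonneg hD hr)
  have hwindow : ∑ s ∈ range k, A ^ s *ᵥ (A ^ t' *ᵥ x) = 0 := by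
    calc _ = ∑ s ∈ range k, A ^ t' *ᵥ (A ^ s *ᵥ x) :=
          sum_congr rfl fun s _ => by rw [← hshift, add_comm, hshift]
      _ = 0 := by rw [← mulVec_sum, hsum, mulVec_zero]
  have hzero : A ^ t' *ᵥ x = 0 := by
    simpa using (sum_eq_zero_iff_of_nonneg fun s _ => hnonneg s).mp hwindow 0 (mem_range.mpr hk)
  calc x = A ^ (t' + (k * t' - t')) *ᵥ x := by
        rw [Nat.add_sub_cancel' (Nat.le_mul_of_pos_left t' hk), pow_mul_mulVec_eq_self hper]
    _ = 0 := by rw [hshift, hzero, mulVec_zero]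

theorem eq_zero_of_blockTriangular {m : ℕ} {A : Matrix ι ι ℝ} (hA : ∀ i j, 0 ≤ A i j)
    {b : ι → Fin m} (htri : ∀ i j, b i < b j → A i j = 0) {k : ℕ} (hk : 0 < k)
    (hblock : ∀ p, _root_.IsPrimitive (diagBlock A b p) ∨
      ∀ x, diagBlock A b p ^ k *ᵥ x = x → x = 0)
    {u : ι → ℝ} (hu : 0 ≤ u) (hAu : A *ᵥ u ≤ u) {w : ι → ℝ} (hper : A ^ k *ᵥ w = w)
    (hsum : ∑ t ∈ range k, A ^ t *ᵥ w = 0) (hsupp : ∀ t i, u i = 0 → (A ^ t *ᵥ w) i = 0) :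
    w = 0 := by
  have hshift : ∀ t s, A ^ (t + s) *ᵥ w = A ^ t *ᵥ (A ^ s *ᵥ w) := fun t s => by
    rw [mulVec_mulVec, pow_add]
  suffices h : ∀ p t i, b i = p → (A ^ t *ᵥ w) i = 0 by
    funext i
    simpa using h (b i) 0 i rfl
  intro p
  induction p using WellFoundedLT.induction with | _ p ih => ?_
  intro t
  set x : {i // b i = p} → ℝ := fun i => (A ^ t *ᵥ w) i
  have hx_pow : ∀ s, diagBlock A b p ^ s *ᵥ x =
      fun i : {i // b i = p} => (A ^ (t + s) *ᵥ w) i := by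
    intro s
    induction s with
    | zero => rw [pow_zero, one_mulVec, add_zero]
    | succ s ihs =>
      funext i
      rw [pow_succ', ← mulVec_mulVec, ihs, diagBlock_mulVec_apply htri
        (fun j hj => ih (b j) hj _ j rfl), ← add_assoc, pow_succ', ← mulVec_mulVec]
  have hx_per : diagBlock A b p ^ k *ᵥ x = x := by
    simp only [hx_pow, hshift, hper, x]
  have hx_sum : ∑ s ∈ range k, diagBlock A b p ^ s *ᵥ x = 0 := by
    funext i
    simp only [hx_pow, hshift, Finset.sum_apply]
    rw [← Finset.sum_apply, ← mulVec_sum, hsum, mulVec_zero]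
    rfl
  have hx : x = 0 := by
    rcases hblock p with hprim | hcontr
    · by_cases hu0 : (fun i : {i // b i = p} => u i) = 0
      · funext i
        exact hsupp t i (congrFun hu0 i)
      · exact hprim.eq_zero_of_pow_mulVec_eq_self (A := diagBlock A b p) (fun i j => hA i j)
          (fun i => hu i) hu0 (fun i => (diagBlock_mulVec_apply_le hA b p hu i).trans (hAu i))
          hk hx_per hx_sum
    · exact hcontr x hx_per
  intro i hi
  exact congrFun hx ⟨i, hi⟩

theorem IsPBFrobenius.mulVec_eq_smul_of_pow_mulVec_eq_pow_smul {M : Matrix ι ι ℝ}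
    (hPB : IsPBFrobenius M) (hM : ∀ i j, 0 ≤ M i j) {c : ℝ} (hc : 1 < c) {k : ℕ} (hk : 0 < k)
    {v : ι → ℝ} (hv : 0 ≤ v) (h : M ^ k *ᵥ v = c ^ k • v) : M *ᵥ v = c • v := by
  obtain ⟨m, b, htri, hblocks⟩ := hPB
  have hc0 : 0 < c := one_pos.trans hc
  set A := c⁻¹ • M
  have hA : ∀ i j, 0 ≤ A i j := fun i j => mul_nonneg (inv_nonneg.mpr hc0.le) (hM i j)
  have hdiag : ∀ p, diagBlock A b p = c⁻¹ • diagBlock M b p := fun p => rfl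
  have hper : A ^ k *ᵥ v = v := by
    rw [smul_pow, smul_mulVec, h, smul_smul, inv_pow, inv_mul_cancel₀ (by positivity), one_smul]
  have hsupp : ∀ t i, (∑ s ∈ range k, A ^ s *ᵥ v) i = 0 → (A ^ t *ᵥ (A *ᵥ v - v)) i = 0 := by
    intro t i hi
    rw [mulVec_sub, mulVec_mulVec, ← pow_succ, Pi.sub_apply,
      pow_mulVec_apply_eq_zero_of_sum_apply_eq_zero hA hv hk hper hi,
      pow_mulVec_apply_eq_zero_of_sum_apply_eq_zero hA hv hk hper hi, sub_zero]
  have hw : A *ᵥ v - v = 0 := by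
    refine eq_zero_of_blockTriangular hA (fun i j hij => by simp [A, htri i j hij]) hk
      (fun p => by
        rw [hdiag]
        exact (hblocks p).imp (fun hp => hp.smul (inv_pos.mpr hc0)) fun hp x hx =>
          hp.eq_zero_of_pow_mulVec_eq_self (B := diagBlock M b p) (fun i j => hM i j) hc hk hx)
      (sum_nonneg fun t _ => mulVec_nonneg (pow_apply_nonneg hA t) hv)
      (sub_eq_zero.mp (by rw [mulVec_sum_range_pow_mulVec_sub, hper, sub_self])).le
      ?_ (by rw [sum_range_pow_mulVec_sub, hper, sub_self]) hsupp
    rw [mulVec_sub, mulVec_mulVec, ← pow_succ, pow_succ', ← mulVec_mulVec, hper]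
  rw [sub_eq_zero, smul_mulVec] at hw
  conv_rhs => rw [← hw, smul_smul, mul_inv_cancel₀ hc0.ne', one_smul]

end Blocks

theorem statement12_general {n : ℕ} (M₀ : Matrix (Fin n) (Fin n) ℝ)
    (hZ : ∀ i j, ∃ z : ℕ, M₀ i j = (z : ℝ))
    (hPB : IsPBFrobenius M₀) (hexp : MatExpanding M₀)
    (k : ℕ) (hk : 1 ≤ k)
    (v : Fin n → ℝ) (hv : ∀ i, 0 ≤ v i) (hvne : v ≠ 0)
    (μ : ℝ) (heig : (M₀ ^ k).mulVec v = μ • v) :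
    ∃ μ₀ : ℝ, M₀.mulVec v = μ₀ • v := by
  choose N hN using hZ
  obtain rfl : M₀ = (Matrix.of N).map ((↑) : ℕ → ℝ) := Matrix.ext hN
  have hμ : 1 < μ := hexp.one_lt_of_pow_mulVec_eq_smul hk hv hvne heig
  have hroot : (μ ^ (k : ℝ)⁻¹) ^ k = μ := Real.rpow_inv_natCast_pow (by positivity) (by omega)
  refine ⟨μ ^ (k : ℝ)⁻¹, hPB.mulVec_eq_smul_of_pow_mulVec_eq_pow_smul
    (fun i j => Nat.cast_nonneg _) (Real.one_lt_rpow hμ (by positivity)) hk hv ?_⟩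
  rw [hroot, heig]

/-- If `M₀` is expanding and in PB-Frobenius form, and the positive power `M₀^k` is in
primitive Frobenius form, then every non-negative eigenvector of `M₀^k` is also an
eigenvector of `M₀`. -/
theorem statement12 {n : ℕ} (M₀ : Matrix (Fin n) (Fin n) ℝ)
    (hZ : ∀ i j, ∃ z : ℕ, M₀ i j = (z : ℝ))
    (hPB : IsPBFrobenius M₀) (hexp : MatExpanding M₀)
    (k : ℕ) (hk : 1 ≤ k) (hPF : IsPrimFrobenius (M₀ ^ k))
    (v : Fin n → ℝ) (hv : ∀ i, 0 ≤ v i) (hvne : v ≠ 0)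
    (μ : ℝ) (heig : (M₀ ^ k).mulVec v = μ • v) :
    ∃ μ₀ : ℝ, M₀.mulVec v = μ₀ • v :=
  statement12_general M₀ hZ hPB hexp k hk v hv hvne μ heig
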